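/- If f is a minterm-transitive Boolean function on n variables, then s⁰(f)·s¹(f) = Ω(√n); concretely, if f = p^G with pattern support size k ≥ 1, then s⁰(f)·s¹(f) ≥ max(c·n/k, k/2) ≥ c'·√n for absolute constants c, c' > 0. -/

import Mathlib

/-- Flip the `i`-th bit of `x`. -/
def flipBit {n : ℕ} (x : Fin n → Bool) (i : Fin n) : Fin n → Bool :=
  fun j => if j = i then !x j else x j

/-- Flip all bits of `x` in the block `B`. -/
def flipSet {n : ℕ} (x : Fin n → Bool) (B : Finset (Fin n)) : Fin n → Bool :=
  fun j => if j ∈ B then !x j else x j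

/-- Sensitivity of `f` at the input `x`. -/
def sensAt {n : ℕ} (f : (Fin n → Bool) → Bool) (x : Fin n → Bool) : ℕ :=
  (Finset.univ.filter fun i => f (flipBit x i) ≠ f x).card

/-- Sensitivity of `f`. -/
def sens {n : ℕ} (f : (Fin n → Bool) → Bool) : ℕ :=
  Finset.univ.sup fun x => sensAt f x

/-- 0-sensitivity of `f`: max sensitivity over inputs where `f` is 0. -/
def sens0 {n : ℕ} (f : (Fin n → Bool) → Bool) : ℕ :=
  (Finset.univ.filter fun x => f x = false).sup fun x => sensAt f x

/-- 1-sensitivity of `f`: max sensitivity over inputs where `f` is 1. -/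
def sens1 {n : ℕ} (f : (Fin n → Bool) → Bool) : ℕ :=
  (Finset.univ.filter fun x => f x = true).sup fun x => sensAt f x

/-- Block sensitivity of `f` at `x`: the largest number of pairwise disjoint
nonempty blocks each of whose flips changes the value of `f` at `x`. -/
noncomputable def bsensAt {n : ℕ} (f : (Fin n → Bool) → Bool) (x : Fin n → Bool) : ℕ :=
  sSup {r : ℕ | ∃ B : Fin r → Finset (Fin n),
    (∀ j, (B j).Nonempty ∧ f (flipSet x (B j)) ≠ f x) ∧
    ∀ j j', j ≠ j' → Disjoint (B j) (B j')}

/-- Block sensitivity of `f`. -/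
noncomputable def bsens {n : ℕ} (f : (Fin n → Bool) → Bool) : ℕ :=
  Finset.univ.sup fun x => bsensAt f x

/-- A permutation group on `[n]` is transitive. -/
def IsTransitive {n : ℕ} (G : Subgroup (Equiv.Perm (Fin n))) : Prop :=
  ∀ i j : Fin n, ∃ π ∈ G, π i = j

open Classical in
/-- The minterm-transitive function `p^G` defined by the partial assignment
`p` with support `S`: it is 1 on `x` iff `x` extends some `G`-shift of `p`. -/
noncomputable def mintermFn {n : ℕ} (G : Subgroup (Equiv.Perm (Fin n)))
    (S : Finset (Fin n)) (p : Fin n → Bool) : (Fin n → Bool) → Bool :=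
  fun x => decide (∃ π ∈ G, ∀ i ∈ S, x (π i) = p i)

/-! Write `k = #S`. At the 1-input that is `p` on `S` and `!b` elsewhere, flipping a coordinate
`i ∈ S` with `p i = b` leaves fewer `b`'s than any copy of the pattern needs; so both classes
`{i ∈ S | p i = b}` have at most `s¹` elements and `k ≤ 2 s¹`.

For `s⁰`, grow a 0-input greedily, keeping the certificates of its sensitive coordinates inside a
set `U`. While `k * #U < n`, double counting over the transitive group gives a shift of `S` missing
`U`; writing the pattern there gives a 1-input, and walking towards it inside that shift one
coordinate at a time finds a new sensitive coordinate of a 0-input that still agrees with the old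
one on `U`. Each step enlarges `U` by at most `k`, so `n ≤ k² (s⁰ + 1) ≤ 4 k s⁰ s¹`. -/

open Finset

namespace MulAction

variable {α β : Type*} [Group α] [MulAction α β] [Fintype α] [DecidableEq β]
  [IsPretransitive α β]

theorem card_filter_smul_eq_eq_card_filter_smul_eq_self (a b : β) :
    #{g : α | g • a = b} = #{g : α | g • a = a} := by
  obtain ⟨σ, rfl⟩ := exists_smul_eq α a b
  refine card_bij' (fun g _ => σ⁻¹ * g) (fun g _ => σ * g) ?_ ?_ ?_ ?_ <;>
    simp [mul_smul, inv_smul_eq_iff]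

variable [Fintype β]

theorem card_filter_smul_mem_mul_card (a : β) (U : Finset β) :
    #{g : α | g • a ∈ U} * Fintype.card β = #U * Fintype.card α := by
  have hfib (V : Finset β) : #{g : α | g • a ∈ V} = #V * #{g : α | g • a = a} := by
    rw [card_eq_sum_card_fiberwise (f := (· • a)) (t := V) fun g hg => by simpa using hg]
    rw [sum_congr rfl fun b hb => ?_, sum_const, smul_eq_mul]
    rw [filter_filter, ← card_filter_smul_eq_eq_card_filter_smul_eq_self a b]
    congr 1; ext g; simp only [mem_filter, mem_univ, true_and]
    exact ⟨And.right, fun h => ⟨h ▸ hb, h⟩⟩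
  have huniv := hfib univ
  simp only [mem_univ, filter_true, card_univ] at huniv
  rw [hfib U, huniv]; ring

theorem exists_smul_notMem_of_card_mul_card_lt (S U : Finset β)
    (h : #S * #U < Fintype.card β) : ∃ g : α, ∀ a ∈ S, g • a ∉ U := by
  classical
  by_contra! hcon
  have hcover : (univ : Finset α) ⊆ S.biUnion fun a => {g : α | g • a ∈ U} := by
    intro g _
    obtain ⟨a, ha, hgU⟩ := hcon g
    exact mem_biUnion.2 ⟨a, ha, mem_filter.2 ⟨mem_univ g, hgU⟩⟩
  have : Fintype.card α * Fintype.card β ≤ #S * #U * Fintype.card α := by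
    calc Fintype.card α * Fintype.card β
        ≤ (∑ a ∈ S, #{g : α | g • a ∈ U}) * Fintype.card β := by
          rw [← card_univ]; gcongr; exact (card_le_card hcover).trans card_biUnion_le
      _ = #S * #U * Fintype.card α := by
          rw [sum_mul, sum_congr rfl fun a _ => card_filter_smul_mem_mul_card a U]
          rw [sum_const, smul_eq_mul]; ring
  have hα : 0 < Fintype.card α := Fintype.card_pos
  nlinarith

end MulAction

section Sensitivity

variable {n : ℕ} (f : (Fin n → Bool) → Bool)

theorem filter_flipBit_eq_erase {x : Fin n → Bool} {v : Fin n} {b : Bool} (hx : x v = b) :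
    ({j | flipBit x v j = b} : Finset (Fin n)) = ({j | x j = b} : Finset (Fin n)).erase v := by
  ext j
  simp only [mem_filter, mem_erase, mem_univ, true_and]
  by_cases hjv : j = v
  · simp [flipBit, hjv, hx]
  · simp [flipBit, hjv]

theorem card_le_sensAt {x : Fin n → Bool} {V : Finset (Fin n)}
    (hV : ∀ v ∈ V, f (flipBit x v) ≠ f x) : #V ≤ sensAt f x :=
  card_le_card fun v hv => mem_filter.2 ⟨mem_univ v, hV v hv⟩

theorem sensAt_le_sens0 {x : Fin n → Bool} (hx : f x = false) : sensAt f x ≤ sens0 f :=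
  le_sup (f := sensAt f) (mem_filter.2 ⟨mem_univ x, hx⟩)

theorem sensAt_le_sens1 {x : Fin n → Bool} (hx : f x = true) : sensAt f x ≤ sens1 f :=
  le_sup (f := sensAt f) (mem_filter.2 ⟨mem_univ x, hx⟩)

theorem exists_flipBit_eq_true_of_eqOn_compl (T : Finset (Fin n)) :
    ∀ z w : Fin n → Bool, (∀ j ∉ T, z j = w j) → f z = false → f w = true →
      ∃ z', ∃ v ∈ T, f z' = false ∧ f (flipBit z' v) = true ∧
        ∀ j ∉ T, z' j = z j := by
  classical
  induction T using Finset.induction_on with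
  | empty =>
    intro z w hzw hz hw
    rw [funext fun j => hzw j (notMem_empty j), hw] at hz
    exact Bool.noConfusion hz
  | insert a T ha ih =>
    intro z w hzw hz hw
    by_cases hza : z a = w a
    · obtain ⟨z', v, hv, hz', hflip, hoff⟩ := ih z w (fun j hj => by
        by_cases hja : j = a
        · exact hja ▸ hza
        · exact hzw j (by simp [hja, hj])) hz hw
      exact ⟨z', v, mem_insert_of_mem hv, hz', hflip, fun j hj => hoff j (by simp_all)⟩
    by_cases ha1 : f (flipBit z a) = true
    · exact ⟨z, a, mem_insert_self a T, hz, ha1, fun _ _ => rfl⟩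
    obtain ⟨z', v, hv, hz', hflip, hoff⟩ := ih (flipBit z a) w (fun j hj => by
        by_cases hja : j = a
        · simpa [hja, flipBit] using (Bool.eq_not.2 (Ne.symm hza)).symm
        · simpa [flipBit, hja] using hzw j (by simp [hja, hj]))
      (by simpa using ha1) hw
    refine ⟨z', v, mem_insert_of_mem hv, hz', hflip, fun j hj => ?_⟩
    have hja : j ≠ a := fun h => hj (h ▸ mem_insert_self a T)
    simpa [flipBit, hja] using hoff j (fun h => hj (mem_insert_of_mem h))

theorem one_le_sens0_of_eq_false_of_eq_true {z w : Fin n → Bool} (hz : f z = false)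
    (hw : f w = true) : 1 ≤ sens0 f := by
  obtain ⟨z', v, -, hz', hflip, -⟩ :=
    exists_flipBit_eq_true_of_eqOn_compl f univ z w (by simp) hz hw
  calc 1 = #{v} := (card_singleton v).symm
    _ ≤ sensAt f z' := card_le_sensAt f (by simp [hz', hflip])
    _ ≤ sens0 f := sensAt_le_sens0 f hz'

end Sensitivity

section Minterm

open Equiv

variable {n : ℕ} {G : Subgroup (Perm (Fin n))} {S : Finset (Fin n)} {p : Fin n → Bool}

@[simp]
theorem mintermFn_eq_true_iff {x : Fin n → Bool} :
    mintermFn G S p x = true ↔ ∃ π ∈ G, ∀ i ∈ S, x (π i) = p i := by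
  simp [mintermFn]

theorem mintermFn_piecewise (x : Fin n → Bool) : mintermFn G S p (S.piecewise p x) = true :=
  mintermFn_eq_true_iff.2 ⟨1, G.one_mem, fun i hi => by simp [hi]⟩

theorem mintermFn_const_not {i : Fin n} (hi : i ∈ S) :
    mintermFn G S p (fun _ => !p i) = false := by
  simp only [mintermFn, decide_eq_false_iff_not, not_exists, not_and, not_forall]
  exact fun π _ => ⟨i, hi, by simp⟩

theorem card_filter_le_of_mintermFn_eq_true {x : Fin n → Bool} (hx : mintermFn G S p x = true)
    (b : Bool) : #{i ∈ S | p i = b} ≤ #{j | x j = b} := by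
  obtain ⟨π, -, hπ⟩ := mintermFn_eq_true_iff.1 hx
  refine card_le_card_of_injOn π (fun i hi => ?_) π.injective.injOn
  simp only [coe_filter, Set.mem_ofPred_eq, mem_univ, true_and] at hi ⊢
  rw [hπ i hi.1, hi.2]

theorem card_filter_le_sens1_mintermFn (b : Bool) :
    #{i ∈ S | p i = b} ≤ sens1 (mintermFn G S p) := by
  classical
  let x := S.piecewise p fun _ => !b
  have hx : ({j | x j = b} : Finset (Fin n)) = {i ∈ S | p i = b} := by
    ext j; by_cases hj : j ∈ S <;> simp [x, hj]
  calc #{i ∈ S | p i = b} ≤ sensAt (mintermFn G S p) x := card_le_sensAt _ fun v hv => ?_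
    _ ≤ sens1 (mintermFn G S p) := sensAt_le_sens1 _ (mintermFn_piecewise _)
  obtain ⟨hvS, hvb⟩ := mem_filter.1 hv
  intro heq
  have hle := card_filter_le_of_mintermFn_eq_true (heq.trans (mintermFn_piecewise _)) b
  rw [filter_flipBit_eq_erase (by simp [x, hvS, hvb]), hx,
    card_erase_of_mem (mem_filter.2 ⟨hvS, hvb⟩)] at hle
  have : 0 < #{i ∈ S | p i = b} := card_pos.2 ⟨v, hv⟩
  omega

theorem card_le_two_mul_sens1_mintermFn : #S ≤ 2 * sens1 (mintermFn G S p) := by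
  have htrue := card_filter_le_sens1_mintermFn (G := G) (S := S) (p := p) true
  have hfalse := card_filter_le_sens1_mintermFn (G := G) (S := S) (p := p) false
  have hsplit := card_filter_add_card_filter_not (s := S) (fun i => p i = true)
  simp only [Bool.not_eq_true] at hsplit
  omega

theorem one_le_sens0_mintermFn {i : Fin n} (hi : i ∈ S) : 1 ≤ sens0 (mintermFn G S p) :=
  one_le_sens0_of_eq_false_of_eq_true _ (mintermFn_const_not hi)
    (mintermFn_piecewise fun _ => false)

/-- Since every certificate lies in `U`, changing `z` off `U` keeps every `v ∈ V` sensitive. -/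
def CertifiedSensitive (G : Subgroup (Perm (Fin n))) (S : Finset (Fin n)) (p : Fin n → Bool)
    (z : Fin n → Bool) (U V : Finset (Fin n)) : Prop :=
  mintermFn G S p z = false ∧
    ∀ v ∈ V, ∃ π ∈ G, (∀ i ∈ S, π i ∈ U) ∧ ∀ i ∈ S, flipBit z v (π i) = p i

theorem certifiedSensitive_const_not {i : Fin n} (hi : i ∈ S) :
    CertifiedSensitive G S p (fun _ => !p i) ∅ ∅ :=
  ⟨mintermFn_const_not hi, by simp⟩

theorem CertifiedSensitive.card_le_sens0 {z : Fin n → Bool} {U V : Finset (Fin n)}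
    (h : CertifiedSensitive G S p z U V) : #V ≤ sens0 (mintermFn G S p) := by
  refine (card_le_sensAt _ fun v hv => ?_).trans (sensAt_le_sens0 _ h.1)
  obtain ⟨π, hπ, -, hmatch⟩ := h.2 v hv
  rw [h.1, ne_eq, Bool.not_eq_false, mintermFn_eq_true_iff]
  exact ⟨π, hπ, hmatch⟩

theorem mem_image_of_mintermFn_eq_false {z : Fin n → Bool} {v : Fin n} {π : Perm (Fin n)}
    (hz : mintermFn G S p z = false) (hπ : π ∈ G)
    (hmatch : ∀ i ∈ S, flipBit z v (π i) = p i) :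
    v ∈ S.image π := by
  by_contra hv
  have : mintermFn G S p z = true := mintermFn_eq_true_iff.2 ⟨π, hπ, fun i hi => by
    have hne : π i ≠ v := fun h => hv (h ▸ mem_image_of_mem π hi)
    simpa [flipBit, hne] using hmatch i hi⟩
  simp [hz] at this

theorem IsTransitive.isPretransitive (hG : IsTransitive G) :
    MulAction.IsPretransitive G (Fin n) :=
  ⟨fun i j => let ⟨π, hπ, h⟩ := hG i j; ⟨⟨π, hπ⟩, h⟩⟩

theorem CertifiedSensitive.exists_insert (hG : IsTransitive G) {z : Fin n → Bool}
    {U V : Finset (Fin n)} (h : CertifiedSensitive G S p z U V) (hU : #S * #U < n) :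
    ∃ z' U' V', CertifiedSensitive G S p z' U' V' ∧ #V' = #V + 1 ∧ #U' ≤ #U + #S := by
  classical
  have := hG.isPretransitive
  have : Fintype G := Fintype.ofFinite G
  obtain ⟨⟨π₀, hπ₀⟩, hfree⟩ :=
    MulAction.exists_smul_notMem_of_card_mul_card_lt (α := G) S U (by simpa using hU)
  set T := S.image π₀
  have hUT : ∀ j ∈ U, j ∉ T := by
    intro j hj hjT
    obtain ⟨i, hi, rfl⟩ := mem_image.1 hjT
    exact hfree i hi hj
  have hw : mintermFn G S p (T.piecewise (fun j => p (π₀.symm j)) z) = true :=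
    mintermFn_eq_true_iff.2 ⟨π₀, hπ₀, fun i hi => by simp [T, mem_image_of_mem π₀ hi]⟩
  obtain ⟨z', v, hvT, hz', hflip, hoff⟩ :=
    exists_flipBit_eq_true_of_eqOn_compl _ T z _ (fun j hj => by simp [hj]) h.1 hw
  obtain ⟨π₁, hπ₁, hmatch⟩ := mintermFn_eq_true_iff.1 hflip
  have hvV : v ∉ V := fun hvV => by
    obtain ⟨π, hπ, hπU, hπmatch⟩ := h.2 v hvV
    obtain ⟨i, hi, rfl⟩ := mem_image.1 (mem_image_of_mintermFn_eq_false h.1 hπ hπmatch)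
    exact hUT _ (hπU i hi) hvT
  refine ⟨z', U ∪ S.image π₁, insert v V, ⟨hz', fun v' hv' => ?_⟩,
    card_insert_of_notMem hvV, (card_union_le _ _).trans (by grw [card_image_le])⟩
  obtain rfl | hv'V := mem_insert.1 hv'
  · exact ⟨π₁, hπ₁, fun i hi => mem_union_right _ (mem_image_of_mem π₁ hi), hmatch⟩
  obtain ⟨π, hπ, hπU, hπmatch⟩ := h.2 v' hv'V
  refine ⟨π, hπ, fun i hi => mem_union_left _ (hπU i hi), fun i hi => ?_⟩
  have hz'z := hoff _ (hUT _ (hπU i hi))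
  simpa [flipBit, hz'z] using hπmatch i hi

theorem exists_certifiedSensitive (hG : IsTransitive G) {i : Fin n} (hi : i ∈ S) (r : ℕ)
    (hr : #S * #S * r < n) :
    ∃ z U V, CertifiedSensitive G S p z U V ∧ #V = r ∧ #U ≤ #S * r := by
  induction r with
  | zero => exact ⟨_, ∅, ∅, certifiedSensitive_const_not hi, rfl, by simp⟩
  | succ r ih =>
    obtain ⟨z, U, V, h, hV, hU⟩ := ih (lt_of_le_of_lt (by gcongr; omega) hr)
    have hSU : #S * #U < n := lt_of_le_of_lt (by grw [hU]; nlinarith) hr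
    obtain ⟨z', U', V', h', hV', hU'⟩ := h.exists_insert hG hSU
    exact ⟨z', U', V', h', by omega, by rw [mul_add_one]; omega⟩

theorem le_card_mul_card_mul_sens0_add_one (hG : IsTransitive G) {i : Fin n} (hi : i ∈ S) :
    n ≤ #S * #S * (sens0 (mintermFn G S p) + 1) := by
  by_contra! hlt
  obtain ⟨z, U, V, h, hV, -⟩ := exists_certifiedSensitive (p := p) hG hi _ hlt
  have := h.card_le_sens0
  omega

theorem le_four_mul_card_mul_sens0_mul_sens1 (hG : IsTransitive G) {i : Fin n} (hi : i ∈ S) :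
    n ≤ 4 * #S * (sens0 (mintermFn G S p) * sens1 (mintermFn G S p)) := by
  have h0 := le_card_mul_card_mul_sens0_add_one (p := p) hG hi
  have h1 := one_le_sens0_mintermFn (G := G) (p := p) hi
  have h2 := card_le_two_mul_sens1_mintermFn (G := G) (S := S) (p := p)
  calc n ≤ #S * #S * (2 * sens0 (mintermFn G S p)) := h0.trans (by gcongr; omega)
    _ = 2 * #S * sens0 (mintermFn G S p) * #S := by ring
    _ ≤ 2 * #S * sens0 (mintermFn G S p) * (2 * sens1 (mintermFn G S p)) := by gcongr
    _ = _ := by ring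

end Minterm

/-- For minterm-transitive functions the product of 0- and 1-sensitivity is
`Ω(√n)`: there are absolute constants `c, c' > 0` such that for every
minterm-transitive `f = p^G` with pattern support size `k ≥ 1`,
`s⁰(f)·s¹(f) ≥ max(c·n/k, k/2) ≥ c'·√n`. -/
theorem sens0_mul_sens1_lower_bound :
    ∃ c : ℝ, 0 < c ∧ ∃ c' : ℝ, 0 < c' ∧
      ∀ (n k : ℕ) (G : Subgroup (Equiv.Perm (Fin n))), IsTransitive G →
        ∀ (S : Finset (Fin n)) (p : Fin n → Bool), S.card = k → 1 ≤ k →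
          (c * ((n : ℝ) / (k : ℝ)) ≤
              (sens0 (mintermFn G S p) : ℝ) * (sens1 (mintermFn G S p) : ℝ) ∧
            (k : ℝ) / 2 ≤
              (sens0 (mintermFn G S p) : ℝ) * (sens1 (mintermFn G S p) : ℝ)) ∧
          c' * Real.sqrt (n : ℝ) ≤
            (sens0 (mintermFn G S p) : ℝ) * (sens1 (mintermFn G S p) : ℝ) := by
  refine ⟨1 / 4, by norm_num, 1 / 3, by norm_num, fun n k G hG S p hSk hk => ?_⟩
  obtain ⟨i, hi⟩ : S.Nonempty := card_pos.1 (by omega)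
  subst hSk
  have hn : (n : ℝ) ≤ 4 * #S * (sens0 (mintermFn G S p) * sens1 (mintermFn G S p)) := by
    exact_mod_cast le_four_mul_card_mul_sens0_mul_sens1 hG hi
  have hs0 : (1 : ℝ) ≤ sens0 (mintermFn G S p) := by exact_mod_cast one_le_sens0_mintermFn hi
  have hs1 : (#S : ℝ) ≤ 2 * sens1 (mintermFn G S p) := by
    exact_mod_cast card_le_two_mul_sens1_mintermFn
  have hkP : (#S : ℝ) ≤ 2 * (sens0 (mintermFn G S p) * sens1 (mintermFn G S p)) := by nlinarith
  refine ⟨⟨?_, by linarith⟩, ?_⟩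
  · rw [← mul_div_assoc, div_le_iff₀ (by positivity)]
    linarith
  · have : Real.sqrt n ≤ 3 * (sens0 (mintermFn G S p) * sens1 (mintermFn G S p)) :=
      Real.sqrt_le_iff.2 ⟨by positivity, by nlinarith⟩
    linarith
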